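/- Let G be an inverse semigroup and A a G-algebra. There is a well-defined map α from E(G) to the *-endomorphisms of A such that α_p = α_{e₀}∘(id_A−α_{e₁})∘⋯∘(id_A−α_{eₙ}) whenever p = e₀(1−e₁)⋯(1−eₙ) ∈ E(G) with e₀,…,eₙ idempotents of G (i.e., the right-hand side depends only on p as an element of 𝔽(G,A)); this map is a semigroup homomorphism (α_{pq} = α_p∘α_q for p,q ∈ E(G)) and it extends the restriction of the given G-action to the idempotents of G. -/

import Mathlib

/-! Common setup: inverse semigroups, G-algebras, and the universal *-algebra 𝔽(G,A). -/

noncomputable section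

/-- An inverse semigroup: a semigroup in which every element `g` has a unique
generalized inverse, denoted `star g`. -/
class InverseSemigroup (G : Type*) extends Semigroup G, Star G where
  mul_star_mul_self : ∀ g : G, g * star g * g = g
  star_mul_self_mul_star : ∀ g : G, star g * g * star g = star g
  star_unique : ∀ g h : G, g * h * g = g → h * g * h = h → h = star g

namespace Green

/-! ### The free complex *-algebra on a set of generators

The free complex *-algebra on a set `Y` is realized as the monoid algebra of the free
monoid on the letters `Y × Bool` (a generator together with a formal star flag); its star
operation conjugates coefficients, reverses words and flips the star flags. -/

/-- The free complex *-algebra on the set `Y`. -/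
abbrev FreeStar (Y : Type*) := MonoidAlgebra ℂ (FreeMonoid (Y × Bool))

namespace FreeStar

variable {Y : Type*}

/-- Star of a word: reverse it and flip all star flags. -/
def wordStar (w : FreeMonoid (Y × Bool)) : FreeMonoid (Y × Bool) :=
  FreeMonoid.ofList (((FreeMonoid.toList w).map fun x => (x.1, !x.2)).reverse)

lemma wordStar_mul (v w : FreeMonoid (Y × Bool)) :
    wordStar (v * w) = wordStar w * wordStar v := by
  simp [wordStar, FreeMonoid.toList_mul]

lemma wordStar_wordStar (w : FreeMonoid (Y × Bool)) : wordStar (wordStar w) = w := by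
  simp [wordStar, List.map_reverse, List.map_map, Function.comp_def]

/-- The star operation on the free complex *-algebra, as an additive map. -/
def starAux : FreeStar Y →+ FreeStar Y :=
  (MonoidAlgebra.coeffAddEquiv.symm.toAddMonoidHom).comp
    (((Finsupp.mapDomain.addMonoidHom wordStar).comp
      (Finsupp.mapRange.addMonoidHom (starRingEnd ℂ).toAddMonoidHom)).comp
      (MonoidAlgebra.coeffAddEquiv.toAddMonoidHom))

lemma starAux_apply (f : FreeStar Y) :
    starAux f = MonoidAlgebra.ofCoeff
      (Finsupp.mapDomain wordStar (Finsupp.mapRange (starRingEnd ℂ) (map_zero _) f.coeff)) :=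
  rfl

lemma starAux_single (w : FreeMonoid (Y × Bool)) (c : ℂ) :
    starAux (MonoidAlgebra.single w c) = MonoidAlgebra.single (wordStar w) (starRingEnd ℂ c) := by
  rw [starAux_apply]
  simp [MonoidAlgebra.coeff_single, Finsupp.mapRange_single, Finsupp.mapDomain_single,
    MonoidAlgebra.ofCoeff_single]

instance instStarRing : StarRing (FreeStar Y) where
  star := starAux
  star_involutive := by
    intro f
    induction f using MonoidAlgebra.induction_linear with
    | zero => simp
    | add f g hf hg => simp_all [map_add]
    | single w c => simp [starAux_single, wordStar_wordStar, starRingEnd_self_apply]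
  star_mul := by
    intro f g
    show starAux (f * g) = starAux g * starAux f
    induction f using MonoidAlgebra.induction_linear with
    | zero => simp
    | add f f' hf hf' => simp [mul_add, add_mul, map_add, hf, hf']
    | single w c =>
      induction g using MonoidAlgebra.induction_linear with
      | zero => simp
      | add g g' hg hg' => simp [mul_add, add_mul, map_add, hg, hg']
      | single v d =>
        simp only [MonoidAlgebra.single_mul_single, starAux_single, wordStar_mul, map_mul]
        rw [mul_comm]
  star_add := map_add _

end FreeStar

section GAlgebra

variable {G : Type*} [InverseSemigroup G]
variable {A : Type*} [NonUnitalNormedRing A] [StarRing A] [CStarRing A] [NormedSpace ℂ A]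
  [IsScalarTower ℂ A A] [SMulCommClass ℂ A A] [StarModule ℂ A] [CompleteSpace A]

/-- `α` is an action of the inverse semigroup `G` on the C*-algebra `A` making it a
`G`-algebra: a semigroup homomorphism `G → End(A)` into the *-endomorphisms of `A` such
that `g g*(a)·b = a·g g*(b)` for all `a b : A` and `g : G`. -/
structure IsGAlgebra (α : G → A →⋆ₙₐ[ℂ] A) : Prop where
  map_mul : ∀ g h : G, α (g * h) = (α g).comp (α h)
  central : ∀ (g : G) (a b : A), α (g * star g) a * b = a * α (g * star g) b

variable (α : G → A →⋆ₙₐ[ℂ] A)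

/-- The generator of the free *-algebra corresponding to `a ∈ A`. -/
def genA (a : A) : FreeStar (A ⊕ G) := MonoidAlgebra.single (FreeMonoid.of (Sum.inl a, false)) 1

/-- The generator of the free *-algebra corresponding to `g ∈ G`. -/
def genG (g : G) : FreeStar (A ⊕ G) := MonoidAlgebra.single (FreeMonoid.of (Sum.inr g, false)) 1

/-- The defining relations of `𝔽(G,A)`: the *-algebra relations of `A` are respected, the
multiplication and involution of `G` are respected, and `g(a)·g g* = g·a·g*`,
`[g g*, a] = 0` hold; the relation is moreover closed under `star`, so that the ideal
generated by it is a two-sided *-ideal. -/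
inductive Rel : FreeStar (A ⊕ G) → FreeStar (A ⊕ G) → Prop
  | add_A (a b : A) : Rel (genA (G := G) (a + b)) (genA a + genA b)
  | smul_A (c : ℂ) (a : A) : Rel (genA (G := G) (c • a)) (c • genA a)
  | mul_A (a b : A) : Rel (genA (G := G) (a * b)) (genA a * genA b)
  | star_A (a : A) : Rel (genA (G := G) (star a)) (star (genA a))
  | mul_G (g h : G) : Rel (genG (A := A) (g * h)) (genG g * genG h)
  | star_G (g : G) : Rel (genG (A := A) (star g)) (star (genG g))
  | act (g : G) (a : A) :
      Rel (genA (α g a) * genG g * genG (star g)) (genG g * genA a * genG (star g))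
  | comm (g : G) (a : A) :
      Rel (genG g * genG (star g) * genA a) (genA a * genG g * genG (star g))
  | star_cl {x y} : Rel x y → Rel (star x) (star y)

/-- The universal *-algebra `𝔽(G,A)`: the quotient of the free complex *-algebra on the
set `A ⊔ G` by the two-sided *-ideal generated by the defining relations. -/
abbrev F := RingQuot (Rel α)

instance : StarRing (F α) := RingQuot.starRing _ (fun _ _ h => Rel.star_cl h)

/-- The canonical copy of `a ∈ A` inside `𝔽(G,A)`. -/
def ιA (a : A) : F α := RingQuot.mkAlgHom ℂ (Rel α) (genA a)

/-- The canonical copy of `g ∈ G` inside `𝔽(G,A)`. -/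
def ιG (g : G) : F α := RingQuot.mkAlgHom ℂ (Rel α) (genG g)

/-- The element `e₀(1-e₁)⋯(1-eₙ)` of `𝔽(G,A)` (product expanded multiplicatively),
given `e₀` and the list `[e₁, …, eₙ]`. -/
def elemP (e₀ : G) (l : List G) : F α :=
  l.foldl (fun p e => p - p * ιG α e) (ιG α e₀)

/-- The element `g·e₀(1-e₁)⋯(1-eₙ)` of `𝔽(G,A)`. -/
def elemGE (g e₀ : G) (l : List G) : F α := ιG α g * elemP α e₀ l

/-- The set `E(G)` of projections `e₀(1-e₁)⋯(1-eₙ)` in `𝔽(G,A)`, with `e₀, …, eₙ`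
idempotents of `G`. -/
def EG : Set (F α) :=
  {x | ∃ (e₀ : G) (l : List G), e₀ * e₀ = e₀ ∧ (∀ e ∈ l, e * e = e) ∧ x = elemP α e₀ l}

/-- The inverse semigroup `G_E = {g·p | g ∈ G, p ∈ E(G)}` inside `𝔽(G,A)`. -/
def GE : Set (F α) :=
  {x | ∃ (g e₀ : G) (l : List G),
    e₀ * e₀ = e₀ ∧ (∀ e ∈ l, e * e = e) ∧ x = elemGE α g e₀ l}

/-- The extension of the `G`-action along a list: `(id - α e₁)∘⋯∘(id - α eₙ)`. -/
def actL : List G → A → A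
  | [] => id
  | e :: l => fun a => actL l a - α e (actL l a)

/-- The extension of the `G`-action to `E(G)`:
`α_{e₀(1-e₁)⋯(1-eₙ)} = α_{e₀}∘(id - α_{e₁})∘⋯∘(id - α_{eₙ})`. -/
def actP (e₀ : G) (l : List G) : A → A := fun a => α e₀ (actL α l a)

/-- The extension of the `G`-action to `G_E`: `α_{g·p} = α_g ∘ α_p`. -/
def actGE (g e₀ : G) (l : List G) : A → A := fun a => α g (actP α e₀ l a)

/-- The action of `k* = (g·e₀(1-e₁)⋯(1-eₙ))* = g*·(g e₀ g*)(1 - g e₁ g*)⋯(1 - g eₙ g*)`,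
for `k = g·e₀(1-e₁)⋯(1-eₙ) ∈ G_E`. -/
def actStar (g e₀ : G) (l : List G) : A → A :=
  fun a => α (star g) (actP α (g * e₀ * star g) (l.map fun e => g * e * star g) a)

/-- The subalgebra `A_{k k*} = α_{k k*}(A) = (α_k ∘ α_{k*})(A)`,
for `k = g·e₀(1-e₁)⋯(1-eₙ) ∈ G_E`. -/
def carrier (g e₀ : G) (l : List G) : Set A :=
  Set.range fun a => actGE α g e₀ l (actStar α g e₀ l a)

/-- `S` is a sub-inverse semigroup of `G`: a subset closed under multiplication and
involution. -/
structure IsSubInvSemigroup (S : Set G) : Prop where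
  mul_mem : ∀ {a b : G}, a ∈ S → b ∈ S → a * b ∈ S
  star_mem : ∀ {a : G}, a ∈ S → star a ∈ S

variable (S : Set G)

/-- The set `E(H')` of projections `e₀(1-e₁)⋯(1-eₙ)` with `e₀, …, eₙ` idempotents of
`H' = S`. -/
def EH : Set (F α) :=
  {x | ∃ (e₀ : G) (l : List G), (e₀ ∈ S ∧ e₀ * e₀ = e₀) ∧ (∀ e ∈ l, e ∈ S ∧ e * e = e) ∧
    x = elemP α e₀ l}

/-- `H⁽⁰⁾`: the set of nonzero minimal projections of `E(H')`
(where `q ≤ p` means `q p = q`). -/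
def H0 : Set (F α) :=
  {p | p ∈ EH α S ∧ p ≠ 0 ∧ ∀ q ∈ EH α S, q ≠ 0 → q * p = q → q = p}

/-- The groupoid `H = {t·e | t ∈ H', e ∈ H⁽⁰⁾} \ {0}` associated to `H'`. -/
def Hgpd : Set (F α) :=
  {x | x ≠ 0 ∧ ∃ t ∈ S, ∃ e ∈ H0 α S, x = ιG α t * e}

/-- `G_H = {g·e | g ∈ G, e ∈ H⁽⁰⁾, g* g ≥ e} \ {0}`. -/
def GH : Set (F α) :=
  {x | x ≠ 0 ∧ ∃ (g : G), ∃ e ∈ H0 α S, x = ιG α g * e ∧ e * ιG α (star g * g) = e}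

/-- The relation `≡` on `G_H`: `g ≡ h` iff `g t = h` for some `t ∈ H`. -/
def equivH (x y : F α) : Prop := ∃ t ∈ Hgpd α S, x * t = y

end GAlgebra

/-- For an assertion `P`, the scalar `[P]` which is `1` if `P` is true and `0` if `P`
is false. -/
def ind (P : Prop) : ℂ := @ite _ P (Classical.propDecidable P) 1 0

end Green

/-! Send every generator `a ∈ A` of `𝔽(G,A)` to `0` and every `g ∈ G` to `α_g ∈ End_ℂ(A)`:
all defining relations hold, so this is an algebra map `𝔽(G,A) → End_ℂ(A)`, and `β_p` is its
value at `p`, which makes `β` well defined and multiplicative. For an idempotent `e`, the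
G-algebra axiom `α_e(a)·b = a·α_e(b)` puts `α_e` in the centroid of `A`; hence so does
`α_p = α_{e₀}(1 - α_{e₁})⋯(1 - α_{eₙ})`, which is also idempotent, being a product of
commuting idempotents (idempotents of an inverse semigroup commute). An idempotent centroid
element `T` is multiplicative: `T(xy) = x·T(y) = x·T(T y) = T(x·T y) = T(x)·T(y)`. -/

namespace InverseSemigroup

variable {G : Type*} [InverseSemigroup G]

instance : InvolutiveStar G where
  star_involutive g :=
    (star_unique (star g) g (star_mul_self_mul_star g) (mul_star_mul_self g)).symm

theorem star_eq_self_of_isIdempotentElem {e : G} (he : IsIdempotentElem e) : star e = e :=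
  (star_unique e e (by rw [he, he]) (by rw [he, he])).symm

theorem isIdempotentElem_mul_star (g : G) : IsIdempotentElem (g * star g) := by
  rw [IsIdempotentElem, ← mul_assoc, mul_star_mul_self]

theorem isIdempotentElem_star_mul (g : G) : IsIdempotentElem (star g * g) := by
  simpa only [star_star] using isIdempotentElem_mul_star (star g)

theorem isIdempotentElem_mul {e f : G} (he : IsIdempotentElem e) (hf : IsIdempotentElem f) :
    IsIdempotentElem (e * f) := by
  -- `f (ef)* e` is a generalized inverse of `ef`, so it is `(ef)*`, which is then idempotent.
  have hx : f * star (e * f) * e = star (e * f) := by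
    refine star_unique (e * f) _ ?_ ?_
    · calc e * f * (f * star (e * f) * e) * (e * f)
          = e * (f * f) * star (e * f) * ((e * e) * f) := by simp only [mul_assoc]
        _ = e * f := by rw [he.eq, hf.eq, mul_star_mul_self]
    · calc f * star (e * f) * e * (e * f) * (f * star (e * f) * e)
          = f * (star (e * f) * ((e * e) * (f * f)) * star (e * f)) * e := by
            simp only [mul_assoc]
        _ = f * star (e * f) * e := by rw [he.eq, hf.eq, star_mul_self_mul_star, mul_assoc]
  have hxx : IsIdempotentElem (star (e * f)) :=
    calc star (e * f) * star (e * f) = f * star (e * f) * e * (f * star (e * f) * e) := by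
          rw [hx]
      _ = f * (star (e * f) * (e * f) * star (e * f)) * e := by simp only [mul_assoc]
      _ = star (e * f) := by rw [star_mul_self_mul_star, hx]
  rw [← star_star (e * f), star_eq_self_of_isIdempotentElem hxx]
  exact hxx

theorem commute_of_isIdempotentElem {e f : G} (he : IsIdempotentElem e)
    (hf : IsIdempotentElem f) : Commute e f := by
  have hfe : f * e = star (e * f) := by
    refine star_unique (e * f) (f * e) ?_ ?_
    · calc e * f * (f * e) * (e * f) = (e * (f * f)) * ((e * e) * f) := by simp only [mul_assoc]
        _ = e * f := by rw [he.eq, hf.eq, (isIdempotentElem_mul he hf).eq]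
    · calc f * e * (e * f) * (f * e) = (f * (e * e)) * ((f * f) * e) := by simp only [mul_assoc]
        _ = f * e := by rw [he.eq, hf.eq, (isIdempotentElem_mul hf he).eq]
  exact (hfe.trans (star_eq_self_of_isIdempotentElem (isIdempotentElem_mul he hf))).symm

protected theorem star_mul (g h : G) : star (g * h) = star h * star g := by
  have hc : Commute (h * star h) (star g * g) :=
    commute_of_isIdempotentElem (isIdempotentElem_mul_star h) (isIdempotentElem_star_mul g)
  refine (star_unique (g * h) (star h * star g) ?_ ?_).symm
  · calc g * h * (star h * star g) * (g * h) = g * ((h * star h) * (star g * g)) * h := by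
          simp only [mul_assoc]
      _ = (g * star g * g) * (h * star h * h) := by rw [hc.eq]; simp only [mul_assoc]
      _ = g * h := by rw [mul_star_mul_self, mul_star_mul_self]
  · calc star h * star g * (g * h) * (star h * star g)
          = star h * ((star g * g) * (h * star h)) * star g := by simp only [mul_assoc]
      _ = (star h * h * star h) * (star g * g * star g) := by
          rw [← hc.eq]; simp only [mul_assoc]
      _ = star h * star g := by rw [star_mul_self_mul_star, star_mul_self_mul_star]

instance : StarMul G where
  star_mul := InverseSemigroup.star_mul

end InverseSemigroup

theorem List.foldl_sub_mul_eq_mul_prod {R ι : Type*} [Ring R] (f : ι → R) (l : List ι) (x : R) :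
    l.foldl (fun p i => p - p * f i) x = x * (l.map fun i => 1 - f i).prod := by
  induction l generalizing x with
  | nil => simp
  | cons i l ih => simp only [List.foldl_cons, ih, List.map_cons, List.prod_cons, mul_sub,
      one_mul, sub_mul, mul_assoc]

namespace Module.End

variable (R M : Type*) [CommSemiring R]

def centroid [NonUnitalNonAssocRing M] [Module R M] : Subring (Module.End R M) where
  carrier := {T | ∀ x y, T (x * y) = x * T y ∧ T (x * y) = T x * y}
  mul_mem' {S T} hS hT x y := by
    refine ⟨?_, ?_⟩ <;> simp only [Module.End.mul_apply]
    · rw [(hT x y).1, (hS x (T y)).1]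
    · rw [(hT x y).2, (hS (T x) y).2]
  one_mem' _ _ := ⟨rfl, rfl⟩
  add_mem' {S T} hS hT x y := by
    simp only [LinearMap.add_apply]
    exact ⟨by rw [(hS x y).1, (hT x y).1, mul_add], by rw [(hS x y).2, (hT x y).2, add_mul]⟩
  zero_mem' x y := by simp
  neg_mem' {T} hT x y := by
    simp only [LinearMap.neg_apply]
    exact ⟨by rw [(hT x y).1, mul_neg], by rw [(hT x y).2, neg_mul]⟩

variable {R M}

theorem map_mul_of_mem_centroid [NonUnitalNonAssocRing M] [Module R M] {T : Module.End R M}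
    (hT : T ∈ centroid R M) (hTT : IsIdempotentElem T) (x y : M) : T (x * y) = T x * T y :=
  calc T (x * y) = x * T y := (hT x y).1
    _ = x * T (T y) := by rw [← Module.End.mul_apply, hTT.eq]
    _ = T (x * T y) := (hT x (T y)).1.symm
    _ = T x * T y := (hT x (T y)).2

variable (R M)

def starPreserving [AddCommGroup M] [StarAddMonoid M] [Module R M] : Subring (Module.End R M) where
  carrier := {T | ∀ x, T (star x) = star (T x)}
  mul_mem' {S T} hS hT x := show S (T (star x)) = star (S (T x)) by rw [hT x, hS]
  one_mem' _ := rfl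
  add_mem' {S T} hS hT x := show S (star x) + T (star x) = star (S x + T x) by
    rw [hS, hT, star_add]
  zero_mem' _ := star_zero _ |>.symm
  neg_mem' {T} hT x := show -T (star x) = star (-T x) by rw [hT, star_neg]

end Module.End

namespace Green

namespace FreeStar

theorem star_single_of {Y : Type*} (y : Y × Bool) (c : ℂ) :
    star (MonoidAlgebra.single (FreeMonoid.of y) c : FreeStar Y) =
      MonoidAlgebra.single (FreeMonoid.of (y.1, !y.2)) (star c) :=
  starAux_single _ c

end FreeStar

section GAlgebra

open Module.End

variable {G : Type*} {A : Type*} [NonUnitalNormedRing A] [StarRing A] [NormedSpace ℂ A]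

section Operators

variable (α : G → A →⋆ₙₐ[ℂ] A)

def actEnd (g : G) : Module.End ℂ A := (α g : A →ₗ[ℂ] A)

def projEnd (e₀ : G) (l : List G) : Module.End ℂ A :=
  actEnd α e₀ * (l.map fun e => 1 - actEnd α e).prod

variable {α}

@[simp]
theorem actEnd_apply (g : G) (x : A) : actEnd α g x = α g x := rfl

theorem prod_one_sub_actEnd_apply (l : List G) (x : A) :
    (l.map fun e => 1 - actEnd α e).prod x = actL α l x := by
  induction l with
  | nil => rfl
  | cons e l ih =>
    rw [List.map_cons, List.prod_cons, Module.End.mul_apply, ih]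
    rfl

theorem coe_projEnd (e₀ : G) (l : List G) : ⇑(projEnd α e₀ l) = actP α e₀ l :=
  funext fun x => by rw [projEnd, Module.End.mul_apply, prod_one_sub_actEnd_apply]; rfl

theorem projEnd_mem_starPreserving (e₀ : G) (l : List G) : projEnd α e₀ l ∈ starPreserving ℂ A := by
  have hact (g : G) : actEnd α g ∈ starPreserving ℂ A := fun x => map_star (α g) x
  refine mul_mem (hact e₀) (Subring.list_prod_mem _ fun x hx => ?_)
  obtain ⟨e, -, rfl⟩ := List.mem_map.1 hx
  exact sub_mem (one_mem _) (hact e)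

end Operators

variable [InverseSemigroup G] {α : G → A →⋆ₙₐ[ℂ] A}

namespace IsGAlgebra

variable (hα : IsGAlgebra α)
include hα

theorem apply_apply (g h : G) (x : A) : α g (α h x) = α (g * h) x := by
  rw [hα.map_mul]; rfl

theorem apply_mul_eq_mul_apply {e : G} (he : IsIdempotentElem e) (a b : A) :
    α e a * b = a * α e b := by
  simpa only [InverseSemigroup.star_eq_self_of_isIdempotentElem he, he.eq] using hα.central e a b

theorem actEnd_mul (g h : G) : actEnd α (g * h) = actEnd α g * actEnd α h :=
  LinearMap.ext fun x => (hα.apply_apply g h x).symm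

theorem isIdempotentElem_actEnd {e : G} (he : IsIdempotentElem e) :
    IsIdempotentElem (actEnd α e) := by
  rw [IsIdempotentElem, ← hα.actEnd_mul, he.eq]

theorem commute_actEnd {e f : G} (he : IsIdempotentElem e) (hf : IsIdempotentElem f) :
    Commute (actEnd α e) (actEnd α f) := by
  rw [Commute, SemiconjBy, ← hα.actEnd_mul, ← hα.actEnd_mul,
    (InverseSemigroup.commute_of_isIdempotentElem he hf).eq]

theorem actEnd_mem_centroid {e : G} (he : IsIdempotentElem e) : actEnd α e ∈ centroid ℂ A := by
  have hee (x : A) : α e (α e x) = α e x := by rw [hα.apply_apply, he.eq]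
  refine fun x y => ⟨?_, ?_⟩ <;> simp only [actEnd_apply] <;> rw [_root_.map_mul]
  · rw [hα.apply_mul_eq_mul_apply he, hee]
  · rw [← hα.apply_mul_eq_mul_apply he, hee]

theorem commute_actEnd_prod {f : G} (hf : IsIdempotentElem f) {l : List G}
    (hl : ∀ e ∈ l, IsIdempotentElem e) :
    Commute (actEnd α f) (l.map fun e => 1 - actEnd α e).prod := by
  refine Commute.list_prod_right _ _ fun x hx => ?_
  obtain ⟨e, he, rfl⟩ := List.mem_map.1 hx
  exact (Commute.one_right _).sub_right (hα.commute_actEnd hf (hl e he))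

theorem isIdempotentElem_prod_one_sub_actEnd {l : List G} (hl : ∀ e ∈ l, IsIdempotentElem e) :
    IsIdempotentElem (l.map fun e => 1 - actEnd α e).prod := by
  induction l with
  | nil => exact IsIdempotentElem.one
  | cons e l ih =>
    have he := hl e List.mem_cons_self
    have hl' (f : G) (hf : f ∈ l) := hl f (List.mem_cons_of_mem _ hf)
    rw [List.map_cons, List.prod_cons]
    exact .mul_of_commute ((Commute.one_left _).sub_left (hα.commute_actEnd_prod he hl'))
      (hα.isIdempotentElem_actEnd he).one_sub (ih hl')

theorem isIdempotentElem_projEnd {e₀ : G} (h₀ : IsIdempotentElem e₀) {l : List G}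
    (hl : ∀ e ∈ l, IsIdempotentElem e) : IsIdempotentElem (projEnd α e₀ l) :=
  .mul_of_commute (hα.commute_actEnd_prod h₀ hl) (hα.isIdempotentElem_actEnd h₀)
    (hα.isIdempotentElem_prod_one_sub_actEnd hl)

theorem projEnd_mem_centroid {e₀ : G} (h₀ : IsIdempotentElem e₀) {l : List G}
    (hl : ∀ e ∈ l, IsIdempotentElem e) : projEnd α e₀ l ∈ centroid ℂ A := by
  refine mul_mem (hα.actEnd_mem_centroid h₀) (Subring.list_prod_mem _ fun x hx => ?_)
  obtain ⟨e, he, rfl⟩ := List.mem_map.1 hx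
  exact sub_mem (one_mem _) (hα.actEnd_mem_centroid (hl e he))

end IsGAlgebra

section Representation

variable (α)

def letterEnd : (A ⊕ G) × Bool → Module.End ℂ A
  | (Sum.inl _, _) => 0
  | (Sum.inr g, false) => actEnd α g
  | (Sum.inr g, true) => actEnd α (star g)

def freeActionRep : FreeStar (A ⊕ G) →ₐ[ℂ] Module.End ℂ A :=
  MonoidAlgebra.lift ℂ _ _ (FreeMonoid.lift (letterEnd α))

theorem freeActionRep_single_of (y : (A ⊕ G) × Bool) (c : ℂ) :
    freeActionRep α (MonoidAlgebra.single (FreeMonoid.of y) c) = c • letterEnd α y := by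
  rw [freeActionRep, MonoidAlgebra.lift_single, FreeMonoid.lift_eval_of]

variable {α}

@[simp]
theorem freeActionRep_genA (a : A) : freeActionRep α (genA (G := G) a) = 0 := by
  rw [genA, freeActionRep_single_of]; exact smul_zero _

@[simp]
theorem freeActionRep_star_genA (a : A) : freeActionRep α (star (genA (G := G) a)) = 0 := by
  rw [genA, FreeStar.star_single_of, freeActionRep_single_of]; exact smul_zero _

@[simp]
theorem freeActionRep_genG (g : G) : freeActionRep α (genG (A := A) g) = actEnd α g := by
  rw [genG, freeActionRep_single_of, one_smul]; rfl

@[simp]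
theorem freeActionRep_star_genG (g : G) :
    freeActionRep α (star (genG (A := A) g)) = actEnd α (star g) := by
  rw [genG, FreeStar.star_single_of, freeActionRep_single_of, star_one, one_smul]; rfl

theorem freeActionRep_eq_of_rel (hα : IsGAlgebra α) {x y : FreeStar (A ⊕ G)} (h : Rel α x y) :
    freeActionRep α x = freeActionRep α y ∧
      freeActionRep α (star x) = freeActionRep α (star y) := by
  induction h with
  | star_cl _ ih => exact ⟨ih.2, by simpa only [star_star] using ih.1⟩
  | smul_A c a =>
    refine ⟨by simp, ?_⟩
    simp only [genA, MonoidAlgebra.smul_single', FreeStar.star_single_of, freeActionRep_single_of,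
      letterEnd, smul_zero]
  | mul_G g h => simp [star_mul, hα.actEnd_mul]
  | _ => simp [star_mul, star_add]

def actionRep (hα : IsGAlgebra α) : F α →ₐ[ℂ] Module.End ℂ A :=
  RingQuot.liftAlgHom ℂ ⟨freeActionRep α, fun _ _ h => (freeActionRep_eq_of_rel hα h).1⟩

theorem actionRep_ιG (hα : IsGAlgebra α) (g : G) : actionRep hα (ιG α g) = actEnd α g := by
  rw [actionRep, ιG, RingQuot.liftAlgHom_mkAlgHom_apply, freeActionRep_genG]

theorem elemP_eq_mul_prod (e₀ : G) (l : List G) :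
    elemP α e₀ l = ιG α e₀ * (l.map fun e => 1 - ιG α e).prod :=
  List.foldl_sub_mul_eq_mul_prod _ l _

theorem actionRep_elemP (hα : IsGAlgebra α) (e₀ : G) (l : List G) :
    actionRep hα (elemP α e₀ l) = projEnd α e₀ l := by
  simp only [elemP_eq_mul_prod, map_mul, map_list_prod, List.map_map, Function.comp_def, map_sub,
    map_one, actionRep_ιG, projEnd]

end Representation

end GAlgebra

theorem action_extends_to_projections_general
    {G : Type*} [InverseSemigroup G]
    {A : Type*} [NonUnitalNormedRing A] [StarRing A] [NormedSpace ℂ A]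
    (α : G → A →⋆ₙₐ[ℂ] A) (hα : IsGAlgebra α) :
    ∃ β : {p : F α // p ∈ EG α} → A → A,
      (∀ (e₀ : G) (l : List G), e₀ * e₀ = e₀ → (∀ e ∈ l, e * e = e) →
        ∀ hp : elemP α e₀ l ∈ EG α, β ⟨elemP α e₀ l, hp⟩ = actP α e₀ l) ∧
      (∀ p : {p : F α // p ∈ EG α},
        (∀ x y : A, β p (x + y) = β p x + β p y) ∧
        (∀ (c : ℂ) (x : A), β p (c • x) = c • β p x) ∧
        (∀ x y : A, β p (x * y) = β p x * β p y) ∧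
        (∀ x : A, β p (star x) = star (β p x))) ∧
      (∀ (p q : F α) (hp : p ∈ EG α) (hq : q ∈ EG α) (hpq : p * q ∈ EG α),
        β ⟨p * q, hpq⟩ = fun x => β ⟨p, hp⟩ (β ⟨q, hq⟩ x)) ∧
      (∀ (e : G), e * e = e → ∀ he : elemP α e [] ∈ EG α,
        β ⟨elemP α e [], he⟩ = ⇑(α e)) := by
  refine ⟨fun p => actionRep hα p.1, fun e₀ l _ _ _ => ?_, ?_,
    fun p q _ _ _ => congrArg DFunLike.coe (map_mul (actionRep hα) p q),
    fun e _ _ => congrArg DFunLike.coe (actionRep_ιG hα e)⟩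
  · exact (congrArg DFunLike.coe (actionRep_elemP hα e₀ l)).trans (coe_projEnd e₀ l)
  · rintro ⟨_, e₀, l, h₀, hl, rfl⟩
    dsimp only
    rw [actionRep_elemP]
    exact ⟨map_add _, map_smul _,
      Module.End.map_mul_of_mem_centroid (hα.projEnd_mem_centroid h₀ hl)
        (hα.isIdempotentElem_projEnd h₀ hl),
      projEnd_mem_starPreserving e₀ l⟩

/-- Let `G` be an inverse semigroup and `A` a `G`-algebra.  There is a
well-defined map `β` from `E(G)` to the *-endomorphisms of `A` such that
`β_p = α_{e₀}∘(id−α_{e₁})∘⋯∘(id−α_{eₙ})` whenever `p = e₀(1−e₁)⋯(1−eₙ) ∈ E(G)` with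
`e₀, …, eₙ` idempotents of `G` (the right-hand side depends only on `p` as an element of
`𝔽(G,A)`); this map is a semigroup homomorphism on `E(G)` and extends the restriction of
the `G`-action to the idempotents of `G`. -/
theorem action_extends_to_projections
    {G : Type*} [InverseSemigroup G]
    {A : Type*} [NonUnitalNormedRing A] [StarRing A] [CStarRing A] [NormedSpace ℂ A]
    [IsScalarTower ℂ A A] [SMulCommClass ℂ A A] [StarModule ℂ A] [CompleteSpace A]
    (α : G → A →⋆ₙₐ[ℂ] A) (hα : IsGAlgebra α) :
    ∃ β : {p : F α // p ∈ EG α} → A → A,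
      (∀ (e₀ : G) (l : List G), e₀ * e₀ = e₀ → (∀ e ∈ l, e * e = e) →
        ∀ hp : elemP α e₀ l ∈ EG α, β ⟨elemP α e₀ l, hp⟩ = actP α e₀ l) ∧
      (∀ p : {p : F α // p ∈ EG α},
        (∀ x y : A, β p (x + y) = β p x + β p y) ∧
        (∀ (c : ℂ) (x : A), β p (c • x) = c • β p x) ∧
        (∀ x y : A, β p (x * y) = β p x * β p y) ∧
        (∀ x : A, β p (star x) = star (β p x))) ∧
      (∀ (p q : F α) (hp : p ∈ EG α) (hq : q ∈ EG α) (hpq : p * q ∈ EG α),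
        β ⟨p * q, hpq⟩ = fun x => β ⟨p, hp⟩ (β ⟨q, hq⟩ x)) ∧
      (∀ (e : G), e * e = e → ∀ he : elemP α e [] ∈ EG α,
        β ⟨elemP α e [], he⟩ = ⇑(α e)) :=
  action_extends_to_projections_general α hα

end Green
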